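/- Let M ≥ 1 and let x : Fin M → ℂ be injective. Define the constellation-constrained mutual information I_σ(s) = log₂ M − log₂ e − (1/M)·Σ_{i=0}^{M−1} g_i(σ, s). Then for every σ > 0, I_σ(s) → log₂ M as s → ∞. -/

import Mathlib

/-!
For `j ≠ i` the `j`-th exponential in `g_i(σ, s)` tends to `0` as `s → ∞`, since
`‖σ w + √s (x i - x j)‖ ≥ √s ‖x i - x j‖ - |σ| ‖w‖`, while the `j = i` term equals `exp (-‖w‖²)`
for every `s`. Hence `log₂` of the sum tends to `-‖w‖² / log 2`, and its absolute value stays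
below `log₂ M + ‖w‖² / log 2`, which is `γ`-integrable. By dominated convergence
`g_i(σ, s) → -E‖w‖² / log 2 = -log₂ e`, the second moment of `γ` being `1` (computed in polar
coordinates), and averaging over `i` cancels the `-log₂ e`.
-/

open MeasureTheory Real

/-- The standard complex Gaussian probability measure on ℂ:
density `w ↦ (1/π)·exp(−|w|²)` with respect to Lebesgue measure on ℂ ≅ ℝ². -/
noncomputable def gaussianC : Measure ℂ :=
  MeasureTheory.volume.withDensity
    (fun w => ENNReal.ofReal (π⁻¹ * Real.exp (-(‖w‖) ^ 2)))

/-- The expectation term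
`g_i(σ, s) = ∫_ℂ log₂( Σ_j exp( −|σ·w + √s·(x i − x j)|² / σ² ) ) dγ(w)`. -/
noncomputable def g (M : ℕ) (x : Fin M → ℂ) (σ s : ℝ) (i : Fin M) : ℝ :=
  ∫ w : ℂ,
    Real.logb 2 (∑ j : Fin M,
      Real.exp (-(‖(σ : ℂ) * w + (Real.sqrt s : ℂ) * (x i - x j)‖) ^ 2 / σ ^ 2))
    ∂gaussianC

/-- The constellation-constrained secrecy capacity
`C_σ(s) = (1/M)·Σ_i ( g_i(σ, s) − g_i(1, s) )`. -/
noncomputable def Ccc (M : ℕ) (x : Fin M → ℂ) (σ s : ℝ) : ℝ :=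
  (1 / (M : ℝ)) * ∑ i : Fin M, (g M x σ s i - g M x 1 s i)

open Filter Set Topology
open scoped Nat

theorem integral_comp_norm_complex (f : ℝ → ℝ) :
    ∫ w : ℂ, f ‖w‖ = 2 * π * ∫ y in Ioi 0, y * f y := by
  rw [integral_fun_norm_addHaar]
  simp only [Complex.finrank_real_complex, Measure.real, Complex.volume_ball, ENNReal.ofReal_one,
    one_pow, one_mul, ENNReal.coe_toReal, NNReal.coe_real_pi, Nat.add_one_sub_one, pow_one,
    smul_eq_mul, nsmul_eq_mul, Nat.cast_ofNat]
  ring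

theorem integrable_comp_norm_complex_iff {f : ℝ → ℝ} :
    Integrable (fun w : ℂ => f ‖w‖) ↔ IntegrableOn (fun y => y * f y) (Ioi 0) := by
  rw [integrable_fun_norm_addHaar]
  simp [Complex.finrank_real_complex]

lemma mul_pow_mul_exp_neg_sq_eq_rpow (k : ℕ) :
    (fun y : ℝ => y * (y ^ (2 * k) * exp (-y ^ 2)))
      = fun y => y ^ ((2 * k + 1 : ℕ) : ℝ) * exp (-y ^ (2 : ℝ)) := by
  ext y
  rw [rpow_natCast, rpow_two]
  ring

theorem integrable_norm_pow_mul_exp_neg_sq_complex (k : ℕ) :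
    Integrable (fun w : ℂ => ‖w‖ ^ (2 * k) * exp (-‖w‖ ^ 2)) := by
  rw [integrable_comp_norm_complex_iff (f := fun y => y ^ (2 * k) * exp (-y ^ 2)),
    mul_pow_mul_exp_neg_sq_eq_rpow]
  exact integrableOn_rpow_mul_exp_neg_rpow (neg_one_lt_zero.trans_le (Nat.cast_nonneg _)) two_pos

theorem integral_norm_pow_mul_exp_neg_sq_complex (k : ℕ) :
    ∫ w : ℂ, ‖w‖ ^ (2 * k) * exp (-‖w‖ ^ 2) = π * k ! := by
  rw [integral_comp_norm_complex (fun y => y ^ (2 * k) * exp (-y ^ 2)),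
    mul_pow_mul_exp_neg_sq_eq_rpow,
    integral_rpow_mul_exp_neg_rpow two_pos (neg_one_lt_zero.trans_le (Nat.cast_nonneg _)),
    show (((2 * k + 1 : ℕ) : ℝ) + 1) / 2 = k + 1 by push_cast; ring, Gamma_nat_eq_factorial]
  ring

lemma measurable_gaussianC_density :
    Measurable fun w : ℂ => ENNReal.ofReal (π⁻¹ * exp (-‖w‖ ^ 2)) := by
  fun_prop

theorem integral_gaussianC (f : ℂ → ℝ) :
    ∫ w, f w ∂gaussianC = ∫ w, π⁻¹ * exp (-‖w‖ ^ 2) * f w := by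
  rw [gaussianC, integral_withDensity_eq_integral_toReal_smul
    measurable_gaussianC_density (by simp)]
  simp (disch := positivity) only [ENNReal.toReal_ofReal, smul_eq_mul]

theorem integrable_gaussianC_iff {f : ℂ → ℝ} :
    Integrable f gaussianC ↔ Integrable (fun w => π⁻¹ * exp (-‖w‖ ^ 2) * f w) := by
  rw [gaussianC, integrable_withDensity_iff_integrable_smul'
    measurable_gaussianC_density (by simp)]
  simp (disch := positivity) only [ENNReal.toReal_ofReal, smul_eq_mul]

theorem integrable_norm_pow_gaussianC (k : ℕ) :
    Integrable (fun w => ‖w‖ ^ (2 * k)) gaussianC := by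
  rw [integrable_gaussianC_iff]
  simpa only [mul_assoc, mul_comm (exp _)] using
    (integrable_norm_pow_mul_exp_neg_sq_complex k).const_mul π⁻¹

theorem integral_norm_pow_gaussianC (k : ℕ) :
    ∫ w, ‖w‖ ^ (2 * k) ∂gaussianC = k ! := by
  simp_rw [integral_gaussianC, mul_assoc, mul_comm (exp _), integral_const_mul,
    integral_norm_pow_mul_exp_neg_sq_complex, inv_mul_cancel_left₀ pi_ne_zero]

instance : IsProbabilityMeasure gaussianC := by
  have h := integral_norm_pow_gaussianC 0
  simp only [mul_zero, pow_zero, integral_const, smul_eq_mul, mul_one, Nat.factorial_zero,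
    Nat.cast_one, measureReal_def, ENNReal.toReal_eq_one_iff] at h
  exact ⟨h⟩

theorem integral_norm_sq_gaussianC : ∫ w, ‖w‖ ^ 2 ∂gaussianC = 1 := by
  simpa using integral_norm_pow_gaussianC 1

theorem integrable_norm_sq_gaussianC : Integrable (fun w => ‖w‖ ^ 2) gaussianC := by
  simpa using integrable_norm_pow_gaussianC 1

theorem tendsto_norm_add_smul_atTop {E : Type*} [NormedAddCommGroup E] [NormedSpace ℝ E]
    (a : E) {d : E} (hd : d ≠ 0) : Tendsto (fun t : ℝ => ‖a + t • d‖) atTop atTop := by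
  refine tendsto_atTop_mono' atTop ?_ <| tendsto_atTop_add_const_right _ (-‖a‖)
    (tendsto_id.atTop_mul_const (norm_pos_iff.2 hd))
  filter_upwards [eventually_ge_atTop 0] with t ht
  have := norm_sub_norm_le (t • d) (-a)
  rw [norm_neg, sub_neg_eq_add, add_comm, norm_smul, norm_of_nonneg ht] at this
  simpa [sub_eq_add_neg] using this

theorem tendsto_exp_neg_sq_div_of_tendsto_atTop {α : Type*} {l : Filter α} {f : α → ℝ}
    (hf : Tendsto f l atTop) {c : ℝ} (hc : 0 < c) :
    Tendsto (fun a => exp (-f a ^ 2 / c)) l (𝓝 0) := by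
  simp_rw [neg_div]
  exact tendsto_exp_atBot.comp <| tendsto_neg_atTop_atBot.comp <|
    ((tendsto_pow_atTop two_ne_zero).comp hf).atTop_div_const hc

lemma Real.logb_exp (b y : ℝ) : logb b (exp y) = y / log b := by
  rw [logb, log_exp]

noncomputable def likelihoodSum {M : ℕ} (x : Fin M → ℂ) (σ s : ℝ) (i : Fin M) (w : ℂ) : ℝ :=
  ∑ j : Fin M, exp (-‖(σ : ℂ) * w + (√s : ℂ) * (x i - x j)‖ ^ 2 / σ ^ 2)

section likelihoodSum

variable {M : ℕ} (x : Fin M → ℂ) {σ : ℝ} (s : ℝ) (i : Fin M) (w : ℂ)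

lemma g_eq_integral_logb_likelihoodSum :
    g M x σ s i = ∫ w, logb 2 (likelihoodSum x σ s i w) ∂gaussianC := rfl

lemma exp_neg_norm_sq_div_sq_self (hσ : σ ≠ 0) :
    exp (-‖(σ : ℂ) * w + (√s : ℂ) * (x i - x i)‖ ^ 2 / σ ^ 2) = exp (-‖w‖ ^ 2) := by
  rw [sub_self, mul_zero, add_zero, norm_mul, Complex.norm_real, norm_eq_abs, mul_pow, sq_abs,
    neg_div, mul_div_cancel_left₀ _ (pow_ne_zero 2 hσ)]

lemma exp_neg_norm_sq_le_likelihoodSum (hσ : σ ≠ 0) :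
    exp (-‖w‖ ^ 2) ≤ likelihoodSum x σ s i w := by
  rw [← exp_neg_norm_sq_div_sq_self x s i w hσ, likelihoodSum]
  exact Finset.single_le_sum
    (f := fun j => exp (-‖(σ : ℂ) * w + (√s : ℂ) * (x i - x j)‖ ^ 2 / σ ^ 2))
    (fun j _ => (exp_pos _).le) (Finset.mem_univ i)

lemma likelihoodSum_le : likelihoodSum x σ s i w ≤ M := by
  refine (Finset.sum_le_card_nsmul _ _ 1 fun j _ => ?_).trans (by simp)
  rw [exp_le_one_iff, neg_div]
  exact neg_nonpos.2 (by positivity)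

lemma continuous_likelihoodSum : Continuous (likelihoodSum x σ s i) := by
  unfold likelihoodSum
  fun_prop

lemma abs_logb_likelihoodSum_le (hσ : σ ≠ 0) :
    |logb 2 (likelihoodSum x σ s i w)| ≤ logb 2 M + ‖w‖ ^ 2 / log 2 := by
  have hpos : 0 < likelihoodSum x σ s i w :=
    (exp_pos _).trans_le (exp_neg_norm_sq_le_likelihoodSum x s i w hσ)
  have hlower : -‖w‖ ^ 2 / log 2 ≤ logb 2 (likelihoodSum x σ s i w) := by
    rw [← logb_exp]
    exact logb_le_logb_of_le one_lt_two (exp_pos _) (exp_neg_norm_sq_le_likelihoodSum x s i w hσ)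
  have hupper : logb 2 (likelihoodSum x σ s i w) ≤ logb 2 M :=
    logb_le_logb_of_le one_lt_two hpos (likelihoodSum_le x s i w)
  have hM : 0 ≤ logb 2 M := logb_nonneg one_lt_two (mod_cast i.pos)
  have hw : 0 ≤ ‖w‖ ^ 2 / log 2 := by positivity
  rw [abs_le, neg_div] at *
  constructor <;> linarith

theorem tendsto_likelihoodSum_atTop (hx : Function.Injective x) (hσ : σ ≠ 0) :
    Tendsto (fun s => likelihoodSum x σ s i w) atTop (𝓝 (exp (-‖w‖ ^ 2))) := by
  rw [← Fintype.sum_ite_eq' i fun _ => exp (-‖w‖ ^ 2)]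
  unfold likelihoodSum
  refine tendsto_finsetSum _ fun j _ => ?_
  split_ifs with hj
  · simp only [hj, exp_neg_norm_sq_div_sq_self x _ _ w hσ, tendsto_const_nhds]
  · have hd : x i - x j ≠ 0 := sub_ne_zero.2 (hx.ne (Ne.symm hj))
    refine tendsto_exp_neg_sq_div_of_tendsto_atTop ?_ (by positivity)
    simp_rw [← Complex.real_smul]
    exact (tendsto_norm_add_smul_atTop _ hd).comp tendsto_sqrt_atTop

end likelihoodSum

theorem tendsto_g_atTop {M : ℕ} {x : Fin M → ℂ} (hx : Function.Injective x) {σ : ℝ}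
    (hσ : σ ≠ 0) (i : Fin M) : Tendsto (fun s => g M x σ s i) atTop (𝓝 (-logb 2 (exp 1))) := by
  have hlimit : ∫ w, logb 2 (exp (-‖w‖ ^ 2)) ∂gaussianC = -logb 2 (exp 1) := by
    simp_rw [logb_exp, neg_div, integral_neg, integral_div, integral_norm_sq_gaussianC]
  simp_rw [g_eq_integral_logb_likelihoodSum, ← hlimit]
  have hbound : Integrable (fun w => logb 2 M + ‖w‖ ^ 2 / log 2) gaussianC :=
    (integrable_const _).add (integrable_norm_sq_gaussianC.div_const _)
  refine tendsto_integral_filter_of_dominated_convergence _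
    (.of_forall fun s => ?_) (.of_forall fun s => .of_forall fun w => ?_) hbound
    (.of_forall fun w => ?_)
  · exact ((continuous_likelihoodSum x s i).measurable.log.div_const _).aestronglyMeasurable
  · exact (norm_eq_abs _).trans_le (abs_logb_likelihoodSum_le x s i w hσ)
  · exact ((continuousAt_log (exp_pos _).ne').div_const _).tendsto.comp
      (tendsto_likelihoodSum_atTop x i w hx hσ)

theorem cc_mutual_info_tendsto_logM (M : ℕ) (hM : 1 ≤ M) (x : Fin M → ℂ)
    (hx : Function.Injective x) (σ : ℝ) (hσ : 0 < σ) :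
    Filter.Tendsto
      (fun s => Real.logb 2 M - Real.logb 2 (Real.exp 1)
        - (1 / (M : ℝ)) * ∑ i : Fin M, g M x σ s i)
      Filter.atTop (nhds (Real.logb 2 M)) := by
  have hsum : Tendsto (fun s => ∑ i : Fin M, g M x σ s i) atTop (𝓝 (M * -logb 2 (exp 1))) := by
    simpa using tendsto_finsetSum Finset.univ fun i _ => tendsto_g_atTop hx hσ.ne' i
  convert (hsum.const_mul (1 / (M : ℝ))).const_sub (logb 2 M - logb 2 (exp 1)) using 2
  have : (M : ℝ) ≠ 0 := Nat.cast_ne_zero.2 (Nat.one_le_iff_ne_zero.1 hM)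
  field_simp
  ring
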